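/- Let r ≥ 1 be an integer. Then: (a) for every h ∈ K_H^{(r)}, one has t_n^{−r}·h·t_n^{r} ∈ K_n^{(2r)} ∩ K_n^{[r]} and (m·t_{n+1}^{r})^{−1}·diag(h,1)·(m·t_{n+1}^{r}) ∈ K_{n+1}^{(2r)} ∩ K_{n+1}^{[r]}; (b) for every ν ≥ 1, K_ν^{(2r)} ∩ K_ν^{[r]} ⊆ K_ν^{⟨r+1⟩}. -/

import Mathlib

open Matrix

noncomputable section

/-- `v` is a surjective discrete (additive) valuation on the field `F` with uniformizer `ϖ`,
with the convention `v 0 = ⊤`. -/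
def IsDVal {F : Type*} [Field F] (v : F → WithTop ℤ) (ϖ : F) : Prop :=
  (∀ x : F, v x = ⊤ ↔ x = 0) ∧
  (∀ x y : F, v (x * y) = v x + v y) ∧
  (∀ x y : F, min (v x) (v y) ≤ v (x + y)) ∧
  (∀ k : ℤ, ∃ x : F, v x = (k : WithTop ℤ)) ∧
  v ϖ = (1 : WithTop ℤ)

/-- `tMat ϖ ν r` is the integer power `t_ν^r` of the matrix `t_ν = diag(ϖ^{ν-1}, …, ϖ, 1)`. -/
def tMat {F : Type*} [Field F] (ϖ : F) (ν : ℕ) (r : ℤ) : Matrix (Fin ν) (Fin ν) F :=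
  Matrix.diagonal fun i => ϖ ^ (r * ((ν : ℤ) - 1 - ((i : ℕ) : ℤ)))

/-- The antidiagonal permutation matrix `w_ν` ((1-based) entries `1` iff `i + j = ν + 1`). -/
def wMat (F : Type*) [Field F] (ν : ℕ) : Matrix (Fin ν) (Fin ν) F :=
  Matrix.of fun i j => if (i : ℕ) + (j : ℕ) + 1 = ν then 1 else 0

/-- `GL_ν(𝒪)`: integral matrices with an integral two-sided inverse. -/
def GLO {F : Type*} [Field F] (v : F → WithTop ℤ) (ν : ℕ) : Set (Matrix (Fin ν) (Fin ν) F) :=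
  {g | (∀ i j, 0 ≤ v (g i j)) ∧
    ∃ g' : Matrix (Fin ν) (Fin ν) F, (∀ i j, 0 ≤ v (g' i j)) ∧ g * g' = 1 ∧ g' * g = 1}

/-- `N°_ν`: integral upper-triangular unipotent matrices. -/
def NO {F : Type*} [Field F] (v : F → WithTop ℤ) (ν : ℕ) : Set (Matrix (Fin ν) (Fin ν) F) :=
  {g | (∀ i j, 0 ≤ v (g i j)) ∧ (∀ i, g i i = 1) ∧ ∀ i j : Fin ν, j < i → g i j = 0}

/-- `N_ν(F)`: all upper-triangular unipotent matrices. -/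
def Nfull (F : Type*) [Field F] (ν : ℕ) : Set (Matrix (Fin ν) (Fin ν) F) :=
  {g | (∀ i, g i i = 1) ∧ ∀ i j : Fin ν, j < i → g i j = 0}

/-- The standard Iwahori subgroup `Iw_ν`. -/
def Iw {F : Type*} [Field F] (v : F → WithTop ℤ) (ν : ℕ) : Set (Matrix (Fin ν) (Fin ν) F) :=
  {g | g ∈ GLO v ν ∧ ∀ i j : Fin ν, j < i → (1 : WithTop ℤ) ≤ v (g i j)}

/-- `K_ν^{(r)} = GL_ν(𝒪) ∩ t_ν^{-r}·GL_ν(𝒪)·t_ν^{r}` (for any `r : ℤ`). -/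
def Kpar {F : Type*} [Field F] (v : F → WithTop ℤ) (ϖ : F) (ν : ℕ) (r : ℤ) :
    Set (Matrix (Fin ν) (Fin ν) F) :=
  {g | g ∈ GLO v ν ∧ tMat ϖ ν r * g * tMat ϖ ν (-r) ∈ GLO v ν}

/-- `K_ν^{⟨r⟩}`. -/
def KparAng {F : Type*} [Field F] (v : F → WithTop ℤ) (ϖ : F) (ν : ℕ) (r : ℤ) :
    Set (Matrix (Fin ν) (Fin ν) F) :=
  {g | g ∈ Kpar v ϖ ν r ∧ ∀ i, ((|r| - 1 : ℤ) : WithTop ℤ) ≤ v (g i i - 1)}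

/-- `K_ν^{[r]}`. -/
def KparSq {F : Type*} [Field F] (v : F → WithTop ℤ) (ϖ : F) (ν : ℕ) (r : ℤ) :
    Set (Matrix (Fin ν) (Fin ν) F) :=
  {g | g ∈ Kpar v ϖ ν r ∧ ∀ i, ((|r| : ℤ) : WithTop ℤ) ≤ v (g i i - 1)}

/-- A subset of a monoid is a subgroup. -/
def IsSubgrp {M : Type*} [Monoid M] (S : Set M) : Prop :=
  (1 : M) ∈ S ∧ (∀ a ∈ S, ∀ b ∈ S, a * b ∈ S) ∧ ∀ a ∈ S, ∃ b ∈ S, a * b = 1 ∧ b * a = 1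

/-- A standard deeper Iwahori subgroup: a subgroup `K ⊆ Iw_ν` with `K ∩ N_ν(F) = N°_ν`. -/
def IsStdDeeperIwahori {F : Type*} [Field F] (v : F → WithTop ℤ) (ν : ℕ)
    (K : Set (Matrix (Fin ν) (Fin ν) F)) : Prop :=
  IsSubgrp K ∧ K ⊆ Iw v ν ∧ K ∩ Nfull F ν = NO v ν

/-- The all-ones column vector of length `n`. -/
def uCol (F : Type*) [Field F] (n : ℕ) : Matrix (Fin n) (Fin 1) F :=
  Matrix.of fun _ _ => 1

/-- The twisting matrix `m = [[w_n, u],[0,1]]`. -/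
def mMat (F : Type*) [Field F] (n : ℕ) : Matrix (Fin (n + 1)) (Fin (n + 1)) F :=
  Matrix.reindex finSumFinEquiv finSumFinEquiv
    (Matrix.fromBlocks (wMat F n) (uCol F n) 0 (1 : Matrix (Fin 1) (Fin 1) F))

/-- Block-diagonal embedding `h ↦ diag(h, 1)`. -/
def dg1 {F : Type*} [Field F] {n : ℕ} (h : Matrix (Fin n) (Fin n) F) :
    Matrix (Fin (n + 1)) (Fin (n + 1)) F :=
  Matrix.reindex finSumFinEquiv finSumFinEquiv
    (Matrix.fromBlocks h 0 0 (1 : Matrix (Fin 1) (Fin 1) F))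

/-- The subgroup `K_H^{(r)} ⊆ GL_n(𝒪)`. -/
def KH {F : Type*} [Field F] (v : F → WithTop ℤ) (ϖ : F) (n : ℕ) (r : ℤ) :
    Set (Matrix (Fin n) (Fin n) F) :=
  {h | h ∈ GLO v n ∧ (∀ i j, 0 ≤ v ((tMat ϖ n (-r) * h * tMat ϖ n r) i j)) ∧
    (mMat F n)⁻¹ * dg1 h * mMat F n ∈ Kpar v ϖ (n + 1) (-r)}

/-- The double-coset set `K₁ · X₀ · K₂`. -/
def KXK {F : Type*} [Field F] {p q : ℕ} (K1 : Set (Matrix (Fin p) (Fin p) F))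
    (X0 : Matrix (Fin p) (Fin q) F) (K2 : Set (Matrix (Fin q) (Fin q) F)) :
    Set (Matrix (Fin p) (Fin q) F) :=
  {X | ∃ k ∈ K1, ∃ k' ∈ K2, X = k * X0 * k'}

/-- The antidiagonal rectangular matrix `X°` with `X°_{n+2-i, i} = ϖ^{λ_i}` (1-based indices)
and all other entries `0`. -/
def Xanti {F : Type*} [Field F] (ϖ : F) (n : ℕ) (lam : Fin n → ℤ) :
    Matrix (Fin (n + 1)) (Fin n) F :=
  Matrix.of fun r j => if (r : ℕ) + (j : ℕ) = n then ϖ ^ (lam j) else 0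

/-- `diag(ϖ^{λ_1}, …, ϖ^{λ_ν}) · w_ν`. -/
def Xdw {F : Type*} [Field F] (ϖ : F) (ν : ℕ) (lam : Fin ν → ℤ) : Matrix (Fin ν) (Fin ν) F :=
  Matrix.diagonal (fun i => ϖ ^ (lam i)) * wMat F ν

/-- The rectangular matrix `e_{n+1,n}` with upper `n×n` block the identity and zero last row. -/
def ePad (F : Type*) [Field F] (n : ℕ) : Matrix (Fin (n + 1)) (Fin n) F :=
  Matrix.of fun i j => if (i : ℕ) = (j : ℕ) then 1 else 0

/-- `λ_1 + ⋯ + λ_r`. -/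
def minorSum {n : ℕ} (lam : Fin n → ℤ) (r : ℕ) (hrn : r ≤ n) : ℤ :=
  ∑ i : Fin r, lam (Fin.castLE hrn i)

/-- Row indices of the Southwest-principal `r×r` minor: the last `r` rows. -/
def swRow (n r : ℕ) (hrn : r ≤ n) (i : Fin r) : Fin (n + 1) :=
  ⟨n + 1 - r + (i : ℕ), by have := i.isLt; omega⟩

/-- The Minor Condition (relative to fixed integers `λ_1 < ⋯ < λ_n`). -/
def MinorCond {F : Type*} [Field F] (v : F → WithTop ℤ) {n : ℕ} (lam : Fin n → ℤ)
    (X : Matrix (Fin (n + 1)) (Fin n) F) : Prop :=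
  ∀ r : ℕ, 1 ≤ r → ∀ hrn : r ≤ n,
    (∀ (f : Fin r → Fin (n + 1)) (g : Fin r → Fin n), StrictMono f → StrictMono g →
      ((minorSum lam r hrn : ℤ) : WithTop ℤ) ≤ v ((X.submatrix f g).det)) ∧
    v ((X.submatrix (swRow n r hrn) (Fin.castLE hrn)).det) = ((minorSum lam r hrn : ℤ) : WithTop ℤ)

/-- The Weak Minor Condition: Minor Condition restricted to anchored minors. -/
def WeakMinorCond {F : Type*} [Field F] (v : F → WithTop ℤ) {n : ℕ} (lam : Fin n → ℤ)
    (X : Matrix (Fin (n + 1)) (Fin n) F) : Prop :=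
  ∀ r : ℕ, 1 ≤ r → ∀ hrn : r ≤ n,
    (∀ (f : Fin r → Fin (n + 1)) (g : Fin r → Fin n), StrictMono f → StrictMono g →
      Fin.last n ∈ Set.range f →
      ((minorSum lam r hrn : ℤ) : WithTop ℤ) ≤ v ((X.submatrix f g).det)) ∧
    v ((X.submatrix (swRow n r hrn) (Fin.castLE hrn)).det) = ((minorSum lam r hrn : ℤ) : WithTop ℤ)

/-- Condition `Z(i)`: `X_{n+2-i', j} = 0` for all `1 ≤ i' ≤ i` and `i' < j ≤ n` (1-based). -/
def CondZ {F : Type*} [Field F] {n : ℕ} (X : Matrix (Fin (n + 1)) (Fin n) F) (i : ℕ) : Prop :=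
  ∀ i' j : ℕ, (h1 : 1 ≤ i') → (h2 : i' ≤ i) → (h3 : i' < j) → (h4 : j ≤ n) →
    X ⟨n + 1 - i', by omega⟩ ⟨j - 1, by omega⟩ = 0

/-- Condition `Z'(j)`: `X_{n+2-i, j'} = 0` for all `j + 1 ≤ j' < i ≤ n + 1` (1-based). -/
def CondZpr {F : Type*} [Field F] {n : ℕ} (X : Matrix (Fin (n + 1)) (Fin n) F) (j : ℕ) : Prop :=
  ∀ j' i : ℕ, (h1 : j + 1 ≤ j') → (h2 : j' < i) → (h3 : i ≤ n + 1) →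
    X ⟨n + 1 - i, by omega⟩ ⟨j' - 1, by omega⟩ = 0

/-- `h` is `s`-small. -/
def SSmall {F : Type*} [Field F] (v : F → WithTop ℤ) {n : ℕ} (s : ℤ)
    (h : Matrix (Fin n) (Fin n) F) : Prop :=
  (∀ i, v (h i i) = 0) ∧
  ∀ i j : Fin n, ((|((j : ℕ) : ℤ) - ((i : ℕ) : ℤ)| * s : ℤ) : WithTop ℤ) ≤ v (h i j)

/-- Block form `[[α, 0], [*, *]]` with `α` of size `i × i` lower triangular with diagonal
entries of valuation `0`. -/
def BlockLowUpTo {F : Type*} [Field F] (v : F → WithTop ℤ) {n : ℕ} (i : ℕ)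
    (h : Matrix (Fin n) (Fin n) F) : Prop :=
  (∀ a : Fin n, (a : ℕ) < i → v (h a a) = 0) ∧
  ∀ a b : Fin n, (a : ℕ) < i → (a : ℕ) < (b : ℕ) → h a b = 0

/-- `h` is upper-`s`-small up to row `i`. -/
def UpperSmallUpTo {F : Type*} [Field F] (v : F → WithTop ℤ) {n : ℕ} (s : ℤ) (i : ℕ)
    (h : Matrix (Fin n) (Fin n) F) : Prop :=
  ∃ hm hp : Matrix (Fin n) (Fin n) F, BlockLowUpTo v i hm ∧ SSmall v s hp ∧ h = hm * hp

/-- `h` is extremely `s`-small. -/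
def ExtrSmall {F : Type*} [Field F] (v : F → WithTop ℤ) {n : ℕ} (s : ℤ)
    (h : Matrix (Fin n) (Fin n) F) : Prop :=
  SSmall v s h ∧ Matrix.mulVec (wMat F n * h - 1) (fun _ => (1 : F)) = 0

/-- `h` is lower triangular with diagonal entries of valuation `0`. -/
def LowerUnitTri {F : Type*} [Field F] (v : F → WithTop ℤ) {n : ℕ}
    (h : Matrix (Fin n) (Fin n) F) : Prop :=
  (∀ a : Fin n, v (h a a) = 0) ∧ ∀ a b : Fin n, a < b → h a b = 0

/-- `h` is lower-`s`-small from column `j` (1-based `j`). -/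
def LowerSmallFrom {F : Type*} [Field F] (v : F → WithTop ℤ) {n : ℕ} (s : ℤ) (j : ℕ)
    (h : Matrix (Fin n) (Fin n) F) : Prop :=
  ∀ a b : Fin n, j ≤ (b : ℕ) + 1 → (b : ℕ) < (a : ℕ) →
    (((((a : ℕ) : ℤ) - ((b : ℕ) : ℤ)) * s : ℤ) : WithTop ℤ) ≤ v (h a b)

/-- Block form `[[α₋, 0], [*, 1]]` with `α₋` of size `(j-1) × (j-1)` lower triangular with
diagonal entries of valuation `0`, and lower-right identity block (1-based `j`). -/
def BlockLowFrom {F : Type*} [Field F] (v : F → WithTop ℤ) {n : ℕ} (j : ℕ)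
    (h : Matrix (Fin n) (Fin n) F) : Prop :=
  (∀ a : Fin n, (a : ℕ) < j - 1 → v (h a a) = 0) ∧
  (∀ a b : Fin n, (a : ℕ) < j - 1 → (a : ℕ) < (b : ℕ) → h a b = 0) ∧
  ∀ a b : Fin n, j - 1 ≤ (a : ℕ) → j - 1 ≤ (b : ℕ) → h a b = if a = b then 1 else 0

/-- The action `X ._s h := diag(t_n^{-s} h^{-w} t_n^{s}, 1) · X · (t_n^{-s} h t_n^{s})`. -/
def actS {F : Type*} [Field F] (ϖ : F) {n : ℕ} (s : ℤ) (X : Matrix (Fin (n + 1)) (Fin n) F)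
    (h : Matrix (Fin n) (Fin n) F) : Matrix (Fin (n + 1)) (Fin n) F :=
  dg1 (tMat ϖ n (-s) * (wMat F n * h⁻¹ * (wMat F n)⁻¹) * tMat ϖ n s) * X *
    (tMat ϖ n (-s) * h * tMat ϖ n s)

/-- The residue field `𝒪/(ϖ)` has cardinality `q`. -/
def ResidueCard {F : Type*} [Field F] (v : F → WithTop ℤ) (q : ℕ) : Prop :=
  ∃ R : Finset F, R.card = q ∧ (∀ x ∈ R, 0 ≤ v x) ∧
    ∀ x : F, 0 ≤ v x → ∃! y, y ∈ R ∧ (1 : WithTop ℤ) ≤ v (x - y)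

/-- `H` has index `k` in `G`: there is a transversal of cardinality `k`. -/
def IndexEq {M : Type*} [Monoid M] (H G : Set M) (k : ℕ) : Prop :=
  ∃ T : Finset M, T.card = k ∧ ↑T ⊆ G ∧ ∀ g ∈ G, ∃! t, t ∈ T ∧ ∃ h ∈ H, g = h * t

def cExp (ν : ℕ) : ℕ := (ν - 1) * ν * (ν + 1) / 6

def dExp (n : ℕ) : ℕ := n * (n + 1) * (2 * n + 1) / 6

/-- The block matrix `B = [[1_n, u],[0,1]]`. -/
def BMat (F : Type*) [Field F] (n : ℕ) : Matrix (Fin (n + 1)) (Fin (n + 1)) F :=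
  Matrix.reindex finSumFinEquiv finSumFinEquiv
    (Matrix.fromBlocks (1 : Matrix (Fin n) (Fin n) F) (uCol F n) 0 (1 : Matrix (Fin 1) (Fin 1) F))

/-- The group `G = GL_n(F) × GL_{n+1}(F)` (as a matrix pair monoid). -/
abbrev GPair (F : Type*) [Field F] (n : ℕ) :=
  Matrix (Fin n) (Fin n) F × Matrix (Fin (n + 1)) (Fin (n + 1)) F

def tPair {F : Type*} [Field F] (ϖ : F) (n : ℕ) : GPair F n :=
  (tMat ϖ n 1, tMat ϖ (n + 1) 1)

def tPairInv {F : Type*} [Field F] (ϖ : F) (n : ℕ) : GPair F n :=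
  (tMat ϖ n (-1), tMat ϖ (n + 1) (-1))

/-- `m_s = (t_n^s, m·t_{n+1}^s)`. -/
def mPair {F : Type*} [Field F] (ϖ : F) (n : ℕ) (s : ℤ) : GPair F n :=
  (tMat ϖ n s, mMat F n * tMat ϖ (n + 1) s)

/-- `ι(h) = (h, diag(h,1))`. -/
def iotaPair {F : Type*} [Field F] {n : ℕ} (h : Matrix (Fin n) (Fin n) F) : GPair F n :=
  (h, dg1 h)

def NOPair {F : Type*} [Field F] (v : F → WithTop ℤ) (n : ℕ) : Set (GPair F n) :=
  {p | p.1 ∈ NO v n ∧ p.2 ∈ NO v (n + 1)}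

def KAngPair {F : Type*} [Field F] (v : F → WithTop ℤ) (ϖ : F) (n : ℕ) (r : ℤ) :
    Set (GPair F n) :=
  {p | p.1 ∈ KparAng v ϖ n r ∧ p.2 ∈ KparAng v ϖ (n + 1) r}

/-- The left coset `g · K`. -/
def lCoset {M : Type*} [Mul M] (g : M) (K : Set M) : Set M := (g * ·) '' K

/-!
Conjugation by `t_ν^s` multiplies the entry `g i j` by `ϖ ^ (s * (j - i))` and preserves the
determinant, and an integral matrix lies in `GL_ν(𝒪)` iff its determinant is a unit. Hence
`K_ν^{(s)}` is cut out of `GL_ν(𝒪)` by the entrywise bounds `v (g i j) ≥ s * (i - j)`, and every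
claim becomes an estimate on entries. For `h ∈ K_H^{(r)}`, the block `w h w` of `m⁻¹ diag(h,1) m`
gives `v (h i j) ≥ r * (i - j)`, complementing `v (h i j) ≥ r * (j - i)`, and its last column
`w h u - u` gives `v (∑ k, h i k - 1) ≥ r * (i + 1)` (indices from `0`); hence `h i i ≡ 1 mod ϖ^r`.
Part (b) is the monotonicity of the bounds in `s ≥ 0`, as `2 r ≥ r + 1`.
-/

namespace IsDVal

variable {F : Type*} [Field F] {v : F → WithTop ℤ} {ϖ : F}

lemma map_one (hv : IsDVal v ϖ) : v 1 = 0 := by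
  have hne : v 1 ≠ ⊤ := fun h => one_ne_zero ((hv.1 1).1 h)
  have hsq : v 1 = v 1 + v 1 := by rw [← hv.2.1, one_mul]
  lift v 1 to ℤ using hne with a
  norm_cast at hsq ⊢
  omega

def toAddValuation (hv : IsDVal v ϖ) : AddValuation F (WithTop ℤ) :=
  AddValuation.of v ((hv.1 0).2 rfl) hv.map_one hv.2.2.1 hv.2.1

end IsDVal

section Uniformizer

variable {F : Type*} [Field F] (v : AddValuation F (WithTop ℤ)) {ϖ : F}

lemma AddValuation.ne_zero_of_eq_one (hϖ : v ϖ = 1) : ϖ ≠ 0 :=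
  (v.ne_top_iff).1 (by simp [hϖ])

lemma AddValuation.map_zpow_of_eq_one (hϖ : v ϖ = 1) (k : ℤ) : v (ϖ ^ k) = k := by
  cases k with
  | ofNat n => simp [hϖ]
  | negSucc n =>
    rw [zpow_negSucc, AddValuation.map_inv, AddValuation.map_pow, hϖ, nsmul_one,
      Int.negSucc_eq]
    norm_cast

lemma AddValuation.le_map_zpow_mul_iff (hϖ : v ϖ = 1) (k c : ℤ) (x : F) :
    (k : WithTop ℤ) ≤ v (ϖ ^ c * x) ↔ ((k - c : ℤ) : WithTop ℤ) ≤ v x := by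
  rw [AddValuation.map_mul, v.map_zpow_of_eq_one hϖ]
  induction v x using WithTop.recTopCoe with
  | top => simp
  | coe m => norm_cast; omega

end Uniformizer

section tMat

variable {F : Type*} [Field F] {ϖ : F} {ν : ℕ}

lemma tMat_mul_tMat (hϖ : ϖ ≠ 0) (s s' : ℤ) : tMat ϖ ν s * tMat ϖ ν s' = tMat ϖ ν (s + s') := by
  simp only [tMat, diagonal_mul_diagonal, ← zpow_add₀ hϖ, add_mul]

lemma tMat_zero : tMat ϖ ν 0 = 1 := by
  simp [tMat]

lemma tMat_inv (hϖ : ϖ ≠ 0) (s : ℤ) : (tMat ϖ ν s)⁻¹ = tMat ϖ ν (-s) :=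
  inv_eq_right_inv (by rw [tMat_mul_tMat hϖ, add_neg_cancel, tMat_zero])

lemma tMat_conj_apply (hϖ : ϖ ≠ 0) (s : ℤ) (g : Matrix (Fin ν) (Fin ν) F) (i j : Fin ν) :
    (tMat ϖ ν s * g * tMat ϖ ν (-s)) i j = ϖ ^ (s * ((j : ℤ) - i)) * g i j := by
  simp only [tMat, mul_diagonal, diagonal_mul]
  rw [mul_right_comm, ← zpow_add₀ hϖ]
  ring_nf

lemma det_tMat_conj (hϖ : ϖ ≠ 0) (s : ℤ) (g : Matrix (Fin ν) (Fin ν) F) :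
    (tMat ϖ ν s * g * tMat ϖ ν (-s)).det = g.det := by
  rw [det_mul, det_mul, mul_right_comm, ← det_mul, tMat_mul_tMat hϖ, add_neg_cancel, tMat_zero,
    det_one, one_mul]

end tMat

section Kpar

variable {F : Type*} [Field F] (v : AddValuation F (WithTop ℤ)) {ϖ : F} {ν : ℕ}

lemma det_nonneg_of_integral {g : Matrix (Fin ν) (Fin ν) F} (hg : ∀ i j, 0 ≤ v (g i j)) :
    0 ≤ v g.det := by
  rw [det_apply]
  refine v.map_le_sum fun σ _ => ?_
  have hprod : 0 ≤ v (∏ i, g (σ i) i) :=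
    Finset.prod_induction _ (fun x => 0 ≤ v x)
      (fun a b ha hb => by rw [AddValuation.map_mul]; exact add_nonneg ha hb) (by simp)
      fun i _ => hg _ _
  rcases Int.units_eq_one_or (Equiv.Perm.sign σ) with h | h <;> simpa [h] using hprod

lemma adjugate_integral {g : Matrix (Fin ν) (Fin ν) F} (hg : ∀ i j, 0 ≤ v (g i j)) (i j : Fin ν) :
    0 ≤ v (g.adjugate i j) := by
  rw [adjugate_apply]
  refine det_nonneg_of_integral v fun k l => ?_
  rw [updateRow_apply]
  split_ifs
  · rw [Pi.single_apply]; split_ifs <;> simp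
  · exact hg k l

lemma mem_GLO_iff {g : Matrix (Fin ν) (Fin ν) F} :
    g ∈ GLO v ν ↔ (∀ i j, 0 ≤ v (g i j)) ∧ v g.det = 0 := by
  constructor
  · rintro ⟨hg, g', hg', hgg', -⟩
    refine ⟨hg, le_antisymm ?_ (det_nonneg_of_integral v hg)⟩
    calc v g.det ≤ v g.det + v g'.det := le_add_of_nonneg_right (det_nonneg_of_integral v hg')
      _ = 0 := by rw [← AddValuation.map_mul, ← det_mul, hgg', det_one, AddValuation.map_one]
  · rintro ⟨hg, hdet⟩
    have hunit : IsUnit g.det := (v.ne_top_iff.1 (by simp [hdet])).isUnit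
    refine ⟨hg, g⁻¹, fun i j => ?_, mul_nonsing_inv g hunit, nonsing_inv_mul g hunit⟩
    rw [inv_def, Ring.inverse_eq_inv', Matrix.smul_apply, smul_eq_mul, AddValuation.map_mul,
      AddValuation.map_inv, hdet, neg_zero, zero_add]
    exact adjugate_integral v hg i j

variable {v}

lemma integral_tMat_conj_iff (hϖ : v ϖ = 1) (s : ℤ) (g : Matrix (Fin ν) (Fin ν) F) :
    (∀ i j, 0 ≤ v ((tMat ϖ ν s * g * tMat ϖ ν (-s)) i j)) ↔
      ∀ i j : Fin ν, ((s * ((i : ℤ) - j) : ℤ) : WithTop ℤ) ≤ v (g i j) := by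
  refine forall₂_congr fun i j => ?_
  rw [tMat_conj_apply (v.ne_zero_of_eq_one hϖ), ← WithTop.coe_zero, v.le_map_zpow_mul_iff hϖ]
  ring_nf

lemma mem_Kpar_iff (hϖ : v ϖ = 1) {s : ℤ} {g : Matrix (Fin ν) (Fin ν) F} :
    g ∈ Kpar v ϖ ν s ↔
      g ∈ GLO v ν ∧ ∀ i j : Fin ν, ((s * ((i : ℤ) - j) : ℤ) : WithTop ℤ) ≤ v (g i j) := by
  rw [Kpar, Set.mem_ofPred_eq, mem_GLO_iff v (g := tMat ϖ ν s * g * tMat ϖ ν (-s)),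
    det_tMat_conj (v.ne_zero_of_eq_one hϖ), integral_tMat_conj_iff hϖ]
  exact ⟨fun ⟨hg, hb, _⟩ => ⟨hg, hb⟩, fun ⟨hg, hb⟩ => ⟨hg, hb, ((mem_GLO_iff v).1 hg).2⟩⟩

lemma Kpar_zero : Kpar v ϖ ν 0 = GLO v ν := by
  ext g
  simp [Kpar, tMat_zero]

lemma Kpar_subset_Kpar (hϖ : v ϖ = 1) {s s' : ℤ} (hs : 0 ≤ s) (hss' : s ≤ s') :
    Kpar v ϖ ν s' ⊆ Kpar v ϖ ν s := by
  intro g hg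
  rw [mem_Kpar_iff hϖ] at hg ⊢
  refine ⟨hg.1, fun i j => ?_⟩
  rcases le_total (i : ℤ) j with hij | hij
  · exact le_trans (by exact_mod_cast mul_nonpos_of_nonneg_of_nonpos hs (sub_nonpos.2 hij))
      (hg.1.1 i j)
  · exact le_trans (by exact_mod_cast mul_le_mul_of_nonneg_right hss' (sub_nonneg.2 hij))
      (hg.2 i j)

lemma tMat_conj_mem_Kpar (hϖ : v ϖ = 1) {s t : ℤ} {g : Matrix (Fin ν) (Fin ν) F}
    (ht : g ∈ Kpar v ϖ ν t) (hst : g ∈ Kpar v ϖ ν (s + t)) :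
    tMat ϖ ν t * g * tMat ϖ ν (-t) ∈ Kpar v ϖ ν s := by
  rw [mem_Kpar_iff hϖ] at hst ⊢
  refine ⟨ht.2, fun i j => ?_⟩
  rw [tMat_conj_apply (v.ne_zero_of_eq_one hϖ), v.le_map_zpow_mul_iff hϖ]
  exact le_trans (le_of_eq (by congr 1; ring)) (hst.2 i j)

lemma tMat_neg_conj_mem_Kpar_inter_KparSq (hϖ : v ϖ = 1) {r : ℤ} (hr : 0 ≤ r)
    {g : Matrix (Fin ν) (Fin ν) F} (hneg : g ∈ Kpar v ϖ ν (-r)) (hpos : g ∈ Kpar v ϖ ν r)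
    (hdiag : ∀ i, (r : WithTop ℤ) ≤ v (g i i - 1)) :
    tMat ϖ ν (-r) * g * tMat ϖ ν r ∈ Kpar v ϖ ν (2 * r) ∩ KparSq v ϖ ν r := by
  rw [show tMat ϖ ν r = tMat ϖ ν (-(-r)) by rw [neg_neg]]
  refine ⟨tMat_conj_mem_Kpar hϖ hneg (by rwa [show 2 * r + -r = r by ring]),
    tMat_conj_mem_Kpar hϖ hneg (by rw [add_neg_cancel, Kpar_zero]; exact hpos.1), fun i => ?_⟩
  rw [tMat_conj_apply (v.ne_zero_of_eq_one hϖ), sub_self, mul_zero, zpow_zero, one_mul,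
    abs_of_nonneg hr]
  exact hdiag i

lemma Kpar_two_mul_inter_KparSq_subset_KparAng (hϖ : v ϖ = 1) {r : ℤ} (hr : 1 ≤ r) :
    Kpar v ϖ ν (2 * r) ∩ KparSq v ϖ ν r ⊆ KparAng v ϖ ν (r + 1) := by
  rintro g ⟨hg, -, hdiag⟩
  refine ⟨Kpar_subset_Kpar hϖ (by omega) (by omega) hg, fun i => ?_⟩
  rw [show |r + 1| - 1 = |r| by rw [abs_of_pos (by omega), abs_of_pos (by omega)]; ring]
  exact hdiag i

end Kpar

section mMat

variable {F : Type*} [Field F] {n : ℕ}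

lemma wMat_apply (i j : Fin n) : wMat F n i j = if j = i.rev then 1 else 0 := by
  simp only [wMat, of_apply, Fin.ext_iff, Fin.val_rev]
  congr 1
  exact propext ⟨fun _ => by omega, fun _ => by omega⟩

lemma wMat_mul_apply {κ : Type*} (A : Matrix (Fin n) κ F) (i : Fin n) (j : κ) :
    (wMat F n * A) i j = A i.rev j := by
  simp [mul_apply, wMat_apply]

lemma mul_wMat_apply {κ : Type*} [Fintype κ] (A : Matrix κ (Fin n) F) (i : κ) (j : Fin n) :
    (A * wMat F n) i j = A i j.rev := by
  simp [mul_apply, wMat_apply, eq_comm (a := j), Fin.rev_eq_iff]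

lemma wMat_mul_wMat : wMat F n * wMat F n = 1 := by
  ext i j
  simp [wMat_mul_apply, wMat_apply, one_apply, eq_comm]

lemma wMat_mul_uCol : wMat F n * uCol F n = uCol F n := by
  ext i j
  simp [wMat_mul_apply, uCol]

lemma mMat_inv : (mMat F n)⁻¹ = reindex finSumFinEquiv finSumFinEquiv
    (fromBlocks (wMat F n) (-uCol F n) 0 (1 : Matrix (Fin 1) (Fin 1) F)) := by
  refine inv_eq_right_inv ?_
  rw [mMat, ← coe_reindexAlgEquiv F F, ← map_mul, fromBlocks_multiply]
  simp [wMat_mul_wMat, wMat_mul_uCol]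

lemma mMat_inv_mul_dg1_mul_mMat (h : Matrix (Fin n) (Fin n) F) :
    (mMat F n)⁻¹ * dg1 h * mMat F n = reindex finSumFinEquiv finSumFinEquiv
      (fromBlocks (wMat F n * h * wMat F n) (wMat F n * h * uCol F n - uCol F n) 0
        (1 : Matrix (Fin 1) (Fin 1) F)) := by
  rw [mMat_inv, dg1, mMat]
  simp only [← coe_reindexAlgEquiv F F, ← map_mul, fromBlocks_multiply]
  simp [sub_eq_add_neg]

variable (h : Matrix (Fin n) (Fin n) F) (a b : Fin n)

lemma mMat_conj_dg1_apply_castSucc_castSucc :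
    ((mMat F n)⁻¹ * dg1 h * mMat F n) a.castSucc b.castSucc = h a.rev b.rev := by
  simp [mMat_inv_mul_dg1_mul_mMat, mul_wMat_apply, wMat_mul_apply]

lemma mMat_conj_dg1_apply_castSucc_last :
    ((mMat F n)⁻¹ * dg1 h * mMat F n) a.castSucc (Fin.last n) = ∑ k, h a.rev k - 1 := by
  rw [mMat_inv_mul_dg1_mul_mMat]
  simp only [reindex_apply, submatrix_apply, finSumFinEquiv_symm_apply_castSucc,
    finSumFinEquiv_symm_last, fromBlocks_apply₁₂, Matrix.sub_apply, Matrix.mul_assoc,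
    wMat_mul_apply]
  simp [mul_apply, uCol]

lemma mMat_conj_dg1_apply_last_castSucc :
    ((mMat F n)⁻¹ * dg1 h * mMat F n) (Fin.last n) b.castSucc = 0 := by
  simp [mMat_inv_mul_dg1_mul_mMat]

lemma mMat_conj_dg1_apply_last_last :
    ((mMat F n)⁻¹ * dg1 h * mMat F n) (Fin.last n) (Fin.last n) = 1 := by
  simp [mMat_inv_mul_dg1_mul_mMat]

end mMat

lemma Fin.intCast_val_rev {n : ℕ} (a : Fin n) : ((a.rev : ℕ) : ℤ) = n - 1 - a := by
  rw [Fin.val_rev]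
  omega

section KH

variable {F : Type*} [Field F] {v : AddValuation F (WithTop ℤ)} {ϖ : F} {n : ℕ} {r : ℤ}
  {h : Matrix (Fin n) (Fin n) F}

lemma AddValuation.le_map_diag_sub_one {ν : ℕ} {c : WithTop ℤ} {g : Matrix (Fin ν) (Fin ν) F}
    (hoff : ∀ i j, i ≠ j → c ≤ v (g i j)) (hrow : ∀ i, c ≤ v (∑ j, g i j - 1)) (i : Fin ν) :
    c ≤ v (g i i - 1) := by
  have hsplit : g i i - 1 = (∑ j, g i j - 1) - ∑ j ∈ Finset.univ.erase i, g i j := by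
    rw [← Finset.add_sum_erase _ _ (Finset.mem_univ i)]
    ring
  rw [hsplit]
  exact v.map_le_sub (hrow i)
    (v.map_le_sum fun j hj => hoff i j (Finset.ne_of_mem_erase hj).symm)

lemma le_map_of_mem_Kpar_of_mem_Kpar_neg (hϖ : v ϖ = 1) (hr : 0 ≤ r) {ν : ℕ}
    {g : Matrix (Fin ν) (Fin ν) F} (hpos : g ∈ Kpar v ϖ ν r) (hneg : g ∈ Kpar v ϖ ν (-r))
    {i j : Fin ν} (hij : i ≠ j) : (r : WithTop ℤ) ≤ v (g i j) := by
  rcases lt_or_gt_of_ne (Fin.val_ne_of_ne hij) with hlt | hlt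
  · refine le_trans ?_ (((mem_Kpar_iff hϖ).1 hneg).2 i j)
    exact_mod_cast (by nlinarith : r ≤ -r * ((i : ℤ) - j))
  · refine le_trans ?_ (((mem_Kpar_iff hϖ).1 hpos).2 i j)
    exact_mod_cast (by nlinarith : r ≤ r * ((i : ℤ) - j))

lemma mem_Kpar_of_mMat_conj_dg1_mem_Kpar_neg (hϖ : v ϖ = 1) (hh : h ∈ GLO v n)
    (hX : (mMat F n)⁻¹ * dg1 h * mMat F n ∈ Kpar v ϖ (n + 1) (-r)) : h ∈ Kpar v ϖ n r := by
  refine (mem_Kpar_iff hϖ).2 ⟨hh, fun a b => ?_⟩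
  have hab := ((mem_Kpar_iff hϖ).1 hX).2 a.rev.castSucc b.rev.castSucc
  rw [mMat_conj_dg1_apply_castSucc_castSucc, Fin.rev_rev, Fin.rev_rev] at hab
  refine le_trans (le_of_eq ?_) hab
  simp only [Fin.val_castSucc, Fin.intCast_val_rev]
  ring_nf

lemma row_sum_le_of_mMat_conj_dg1_mem_Kpar_neg (hϖ : v ϖ = 1)
    (hX : (mMat F n)⁻¹ * dg1 h * mMat F n ∈ Kpar v ϖ (n + 1) (-r)) (a : Fin n) :
    ((r * (a + 1) : ℤ) : WithTop ℤ) ≤ v (∑ k, h a k - 1) := by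
  have ha := ((mem_Kpar_iff hϖ).1 hX).2 a.rev.castSucc (Fin.last n)
  rw [mMat_conj_dg1_apply_castSucc_last, Fin.rev_rev] at ha
  refine le_trans (le_of_eq ?_) ha
  simp only [Fin.val_castSucc, Fin.val_last, Fin.intCast_val_rev]
  ring_nf

lemma mMat_conj_dg1_mem_Kpar (hϖ : v ϖ = 1) (hr : 0 ≤ r) (hneg : h ∈ Kpar v ϖ n (-r))
    (hX : (mMat F n)⁻¹ * dg1 h * mMat F n ∈ GLO v (n + 1)) :
    (mMat F n)⁻¹ * dg1 h * mMat F n ∈ Kpar v ϖ (n + 1) r := by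
  refine (mem_Kpar_iff hϖ).2 ⟨hX, fun i j => ?_⟩
  rcases le_or_gt (i : ℤ) j with hij | hij
  · exact le_trans (by exact_mod_cast mul_nonpos_of_nonneg_of_nonpos hr (sub_nonpos.2 hij))
      (hX.1 i j)
  induction j using Fin.lastCases with
  | last => simp only [Fin.val_last] at hij; omega
  | cast b =>
    induction i using Fin.lastCases with
    | last => rw [mMat_conj_dg1_apply_last_castSucc, AddValuation.map_zero]; exact le_top
    | cast a =>
      rw [mMat_conj_dg1_apply_castSucc_castSucc]
      refine le_trans (le_of_eq ?_) (((mem_Kpar_iff hϖ).1 hneg).2 a.rev b.rev)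
      simp only [Fin.val_castSucc, Fin.intCast_val_rev]
      ring_nf

lemma diag_sub_one_of_mMat_conj_dg1_mem_Kpar_neg (hϖ : v ϖ = 1) (hr : 0 ≤ r)
    (hpos : h ∈ Kpar v ϖ n r) (hneg : h ∈ Kpar v ϖ n (-r))
    (hX : (mMat F n)⁻¹ * dg1 h * mMat F n ∈ Kpar v ϖ (n + 1) (-r)) (a : Fin n) :
    (r : WithTop ℤ) ≤ v (h a a - 1) :=
  v.le_map_diag_sub_one (fun _ _ hij => le_map_of_mem_Kpar_of_mem_Kpar_neg hϖ hr hpos hneg hij)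
    (fun i => le_trans (by exact_mod_cast (by nlinarith : r ≤ r * ((i : ℤ) + 1)))
      (row_sum_le_of_mMat_conj_dg1_mem_Kpar_neg hϖ hX i)) a

lemma mMat_conj_dg1_diag_sub_one (hdiag : ∀ a, (r : WithTop ℤ) ≤ v (h a a - 1))
    (i : Fin (n + 1)) : (r : WithTop ℤ) ≤ v (((mMat F n)⁻¹ * dg1 h * mMat F n) i i - 1) := by
  induction i using Fin.lastCases with
  | last => simp [mMat_conj_dg1_apply_last_last]
  | cast a => rw [mMat_conj_dg1_apply_castSucc_castSucc]; exact hdiag a.rev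

end KH

theorem statement11_general {F : Type*} [Field F] (v : F → WithTop ℤ) (ϖ : F) (hval : IsDVal v ϖ)
    (n : ℕ) (r : ℤ) (hr : 1 ≤ r) :
    (∀ h ∈ KH v ϖ n r,
      tMat ϖ n (-r) * h * tMat ϖ n r ∈ Kpar v ϖ n (2 * r) ∩ KparSq v ϖ n r ∧
      (mMat F n * tMat ϖ (n + 1) r)⁻¹ * dg1 h * (mMat F n * tMat ϖ (n + 1) r) ∈
        Kpar v ϖ (n + 1) (2 * r) ∩ KparSq v ϖ (n + 1) r) ∧
    ∀ ν : ℕ, 1 ≤ ν → Kpar v ϖ ν (2 * r) ∩ KparSq v ϖ ν r ⊆ KparAng v ϖ ν (r + 1) := by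
  obtain ⟨v, rfl⟩ : ∃ w : AddValuation F (WithTop ℤ), ⇑w = v := ⟨hval.toAddValuation, rfl⟩
  have hϖ : v ϖ = 1 := hval.2.2.2.2
  have hr0 : 0 ≤ r := by omega
  refine ⟨fun h ⟨hGLO, hint, hX⟩ => ?_, fun ν _ => Kpar_two_mul_inter_KparSq_subset_KparAng hϖ hr⟩
  have hneg : h ∈ Kpar v ϖ n (-r) :=
    (mem_Kpar_iff hϖ).2 ⟨hGLO, (integral_tMat_conj_iff hϖ _ _).1 (by rw [neg_neg]; exact hint)⟩
  have hpos : h ∈ Kpar v ϖ n r := mem_Kpar_of_mMat_conj_dg1_mem_Kpar_neg hϖ hGLO hX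
  have hdiag := diag_sub_one_of_mMat_conj_dg1_mem_Kpar_neg hϖ hr0 hpos hneg hX
  refine ⟨tMat_neg_conj_mem_Kpar_inter_KparSq hϖ hr0 hneg hpos hdiag, ?_⟩
  rw [Matrix.mul_inv_rev, tMat_inv (v.ne_zero_of_eq_one hϖ)]
  simpa only [Matrix.mul_assoc] using tMat_neg_conj_mem_Kpar_inter_KparSq hϖ hr0 hX
    (mMat_conj_dg1_mem_Kpar hϖ hr0 hneg hX.1) (mMat_conj_dg1_diag_sub_one hdiag)

/-- Equation (5.7): conjugates of `K_H^{(r)}` land in `K^{(2r)} ∩ K^{[r]} ⊆ K^{⟨r+1⟩}`. -/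
theorem statement11 {F : Type*} [Field F] (v : F → WithTop ℤ) (ϖ : F) (hval : IsDVal v ϖ)
    (n : ℕ) (hn : 1 ≤ n) (r : ℤ) (hr : 1 ≤ r) :
    (∀ h ∈ KH v ϖ n r,
      tMat ϖ n (-r) * h * tMat ϖ n r ∈ Kpar v ϖ n (2 * r) ∩ KparSq v ϖ n r ∧
      (mMat F n * tMat ϖ (n + 1) r)⁻¹ * dg1 h * (mMat F n * tMat ϖ (n + 1) r) ∈
        Kpar v ϖ (n + 1) (2 * r) ∩ KparSq v ϖ (n + 1) r) ∧
    ∀ ν : ℕ, 1 ≤ ν → Kpar v ϖ ν (2 * r) ∩ KparSq v ϖ ν r ⊆ KparAng v ϖ ν (r + 1) :=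
  statement11_general v ϖ hval n r hr
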